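/- On the elliptic curve E over ℚ(σ) given by y² + (σ²-3σ+1)xy = x(x-1)(x + σ² - 3σ), the point ρ₆ = (-σ(σ-3), σ(σ-3)(σ²-3σ+1)) has order exactly 6, with 2ρ₆ = (1, -σ²+3σ-1), 3ρ₆ = (0,0), 4ρ₆ = (1,0), and 5ρ₆ = (-σ²+3σ, 0). -/

import Mathlib

/-!
The curve depends on `σ` only through `u = σ² - 3σ`, and the computation works over any field in
which `u(u + 1) ≠ 0`. The tangent at `ρ = (-u, u(u + 1))` has slope `-u`, giving
`2ρ = (1, -(u + 1))`; the chord through `2ρ` and `ρ` has slope `-(u + 1)` and gives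
`3ρ = (0, 0)`, a point of order two. Hence `6ρ = 0`, so `4ρ = -2ρ` and `5ρ = -ρ` are read off by
negation, and `2ρ, 3ρ ≠ 0` force the order to be exactly `6`.
-/

open WeierstrassCurve

/-- The elliptic curve over `ℚ(σ)` given by
`y² + (σ²-3σ+1)xy = x(x-1)(x + σ² - 3σ) = x³ + (σ²-3σ-1)x² + (-σ²+3σ)x`. -/
noncomputable def W3 : WeierstrassCurve.Affine (RatFunc ℚ) where
  a₁ := RatFunc.X ^ 2 - 3 * RatFunc.X + 1
  a₂ := RatFunc.X ^ 2 - 3 * RatFunc.X - 1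
  a₃ := 0
  a₄ := -RatFunc.X ^ 2 + 3 * RatFunc.X
  a₆ := 0

local notation "σ" => (RatFunc.X : RatFunc ℚ)

open Affine Polynomial

lemma addOrderOf_eq_six {G : Type*} [AddMonoid G] {a : G} (h6 : 6 • a = 0) (h2 : 2 • a ≠ 0)
    (h3 : 3 • a ≠ 0) : addOrderOf a = 6 := by
  refine addOrderOf_eq_of_nsmul_and_div_prime_nsmul (by norm_num) h6 fun p hp hdvd => ?_
  obtain rfl | rfl : p = 2 ∨ p = 3 := by
    rcases hp.dvd_mul.mp (show p ∣ 2 * 3 from hdvd) with h | h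
    · exact .inl ((Nat.prime_dvd_prime_iff_eq hp Nat.prime_two).mp h)
    · exact .inr ((Nat.prime_dvd_prime_iff_eq hp Nat.prime_three).mp h)
  exacts [h3, h2]

lemma RatFunc.algebraMap_ne_zero_of_eval_ne_zero {K : Type*} [CommRing K] [IsDomain K]
    {p : K[X]} {c : K} (h : p.eval c ≠ 0) : algebraMap K[X] (RatFunc K) p ≠ 0 :=
  RatFunc.algebraMap_ne_zero (by rintro rfl; simp at h)

/-- `y² + (u + 1)xy = x(x - 1)(x + u)` -/
def sixTorsionCurve {F : Type*} [Field F] (u : F) : WeierstrassCurve.Affine F where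
  a₁ := u + 1
  a₂ := u - 1
  a₃ := 0
  a₄ := -u
  a₆ := 0

namespace sixTorsionCurve

variable {F : Type*} [Field F] {u : F}

lemma negY_eq (x y : F) : (sixTorsionCurve u).negY x y = -y - (u + 1) * x := by
  simp [negY, sixTorsionCurve]

lemma nonsingular_of_two_mul_add_ne_zero {x y : F} (h : (sixTorsionCurve u).Equation x y)
    (hy : 2 * y + (u + 1) * x ≠ 0) : (sixTorsionCurve u).Nonsingular x y :=
  (nonsingular_iff' x y).mpr ⟨h, .inr (by simpa [sixTorsionCurve] using hy)⟩

lemma nonsingular_rho (hu : u ≠ 0) (hu₁ : u + 1 ≠ 0) :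
    (sixTorsionCurve u).Nonsingular (-u) (u * (u + 1)) :=
  nonsingular_of_two_mul_add_ne_zero (by rw [equation_iff]; simp only [sixTorsionCurve]; ring)
    (by convert mul_ne_zero hu hu₁ using 1; ring)

lemma nonsingular_two_rho (hu₁ : u + 1 ≠ 0) :
    (sixTorsionCurve u).Nonsingular 1 (-(u + 1)) :=
  nonsingular_of_two_mul_add_ne_zero (by rw [equation_iff]; simp only [sixTorsionCurve]; ring)
    (by convert neg_ne_zero.mpr hu₁ using 1; ring)

lemma nonsingular_zero_zero (hu : u ≠ 0) : (sixTorsionCurve u).Nonsingular 0 0 :=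
  nonsingular_zero.mpr ⟨rfl, .inr (neg_ne_zero.mpr hu)⟩

lemma nonsingular_one_zero (hu₁ : u + 1 ≠ 0) : (sixTorsionCurve u).Nonsingular 1 0 :=
  nonsingular_of_two_mul_add_ne_zero (by rw [equation_iff]; simp only [sixTorsionCurve]; ring)
    (by simpa using hu₁)

lemma nonsingular_neg_zero (hu : u ≠ 0) (hu₁ : u + 1 ≠ 0) :
    (sixTorsionCurve u).Nonsingular (-u) 0 :=
  nonsingular_of_two_mul_add_ne_zero (by rw [equation_iff]; simp only [sixTorsionCurve]; ring)
    (by convert neg_ne_zero.mpr (mul_ne_zero hu₁ hu) using 1; ring)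

lemma negY_rho : (sixTorsionCurve u).negY (-u) (u * (u + 1)) = 0 := by
  rw [negY_eq]; ring

variable [DecidableEq F] (hu : u ≠ 0) (hu₁ : u + 1 ≠ 0)

noncomputable def rho : (sixTorsionCurve u).Point := .some _ _ (nonsingular_rho hu hu₁)

lemma two_nsmul_rho : 2 • rho hu hu₁ = .some _ _ (nonsingular_two_rho hu₁) := by
  have hy : u * (u + 1) ≠ (sixTorsionCurve u).negY (-u) (u * (u + 1)) := by
    rw [negY_rho]; exact mul_ne_zero hu hu₁
  have hℓ : (sixTorsionCurve u).slope (-u) (-u) (u * (u + 1)) (u * (u + 1)) = -u := by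
    rw [slope_of_Y_ne rfl hy, negY_rho, sub_zero, div_eq_iff (mul_ne_zero hu hu₁)]
    simp only [sixTorsionCurve]; ring
  rw [rho, two_nsmul, Point.add_self_of_Y_ne hy, Point.some.injEq, hℓ]
  constructor
  · simp only [addX, sixTorsionCurve]; ring
  · simp only [addY, negAddY, addX, negY, sixTorsionCurve]; ring

lemma three_nsmul_rho : 3 • rho hu hu₁ = .some _ _ (nonsingular_zero_zero hu) := by
  have hx : (1 : F) ≠ -u := fun h => hu₁ (by linear_combination h)
  have hℓ : (sixTorsionCurve u).slope 1 (-u) (-(u + 1)) (u * (u + 1)) = -(u + 1) := by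
    rw [slope_of_X_ne hx, div_eq_iff (sub_ne_zero.mpr hx)]; ring
  rw [succ_nsmul, two_nsmul_rho, rho, Point.add_of_X_ne hx, Point.some.injEq, hℓ]
  constructor
  · simp only [addX, sixTorsionCurve]; ring
  · simp only [addY, negAddY, addX, negY, sixTorsionCurve]; ring

lemma two_nsmul_zero_zero : 2 • (Point.some _ _ (nonsingular_zero_zero hu)) = 0 :=
  (two_nsmul _).trans (Point.add_self_of_Y_eq (by rw [negY_eq]; ring))

lemma six_nsmul_rho : 6 • rho hu hu₁ = 0 := by
  rw [show (6 : ℕ) = 3 * 2 from rfl, mul_nsmul, three_nsmul_rho, two_nsmul_zero_zero hu]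

lemma four_nsmul_rho : 4 • rho hu hu₁ = .some _ _ (nonsingular_one_zero hu₁) := by
  have h : (4 : ℕ) • rho hu hu₁ = -(2 • rho hu hu₁) :=
    eq_neg_of_add_eq_zero_left (by rw [← add_nsmul]; exact six_nsmul_rho hu hu₁)
  rw [h, two_nsmul_rho, Point.neg_some, Point.some.injEq, negY_eq]
  constructor <;> ring

lemma five_nsmul_rho : 5 • rho hu hu₁ = .some _ _ (nonsingular_neg_zero hu hu₁) := by
  have h : (5 : ℕ) • rho hu hu₁ = -rho hu hu₁ :=
    eq_neg_of_add_eq_zero_left (by rw [← succ_nsmul]; exact six_nsmul_rho hu hu₁)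
  rw [h, rho, Point.neg_some, Point.some.injEq, negY_rho]
  exact ⟨rfl, rfl⟩

lemma addOrderOf_rho : addOrderOf (rho hu hu₁) = 6 :=
  addOrderOf_eq_six (six_nsmul_rho hu hu₁)
    (by rw [two_nsmul_rho]; exact Point.some_ne_zero _)
    (by rw [three_nsmul_rho]; exact Point.some_ne_zero _)

end sixTorsionCurve

lemma W3_eq_sixTorsionCurve : W3 = sixTorsionCurve (σ ^ 2 - 3 * σ) := by
  unfold W3 sixTorsionCurve
  congr 1
  ring

open Classical in
/-- The point `ρ₆ = (-σ(σ-3), σ(σ-3)(σ²-3σ+1))` on `W3` has order exactly 6, with the listed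
multiples. -/
theorem W3_rho6_order_six :
    ∃ (h1 : W3.Nonsingular (-σ * (σ - 3)) (σ * (σ - 3) * (σ ^ 2 - 3 * σ + 1)))
      (h2 : W3.Nonsingular 1 (-σ ^ 2 + 3 * σ - 1))
      (h3 : W3.Nonsingular 0 0)
      (h4 : W3.Nonsingular 1 0)
      (h5 : W3.Nonsingular (-σ ^ 2 + 3 * σ) 0),
      addOrderOf (WeierstrassCurve.Affine.Point.some _ _ h1) = 6 ∧
      2 • (WeierstrassCurve.Affine.Point.some _ _ h1) = .some _ _ h2 ∧
      3 • (WeierstrassCurve.Affine.Point.some _ _ h1) = .some _ _ h3 ∧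
      4 • (WeierstrassCurve.Affine.Point.some _ _ h1) = .some _ _ h4 ∧
      5 • (WeierstrassCurve.Affine.Point.some _ _ h1) = .some _ _ h5 := by
  have hu : σ ^ 2 - 3 * σ ≠ 0 := by
    have h := RatFunc.algebraMap_ne_zero_of_eval_ne_zero (p := X ^ 2 - 3 * X) (c := (1 : ℚ))
      (by norm_num)
    simpa only [map_sub, map_pow, map_mul, map_ofNat, RatFunc.algebraMap_X] using h
  have hu₁ : σ ^ 2 - 3 * σ + 1 ≠ 0 := by
    have h := RatFunc.algebraMap_ne_zero_of_eval_ne_zero (p := X ^ 2 - 3 * X + 1) (c := (0 : ℚ))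
      (by norm_num)
    simpa only [map_add, map_sub, map_pow, map_mul, map_ofNat, map_one, RatFunc.algebraMap_X]
      using h
  rw [W3_eq_sixTorsionCurve, show -σ * (σ - 3) = -(σ ^ 2 - 3 * σ) by ring,
    show σ * (σ - 3) * (σ ^ 2 - 3 * σ + 1) = (σ ^ 2 - 3 * σ) * (σ ^ 2 - 3 * σ + 1) by ring,
    show -σ ^ 2 + 3 * σ - 1 = -(σ ^ 2 - 3 * σ + 1) by ring,
    show -σ ^ 2 + 3 * σ = -(σ ^ 2 - 3 * σ) by ring]
  open sixTorsionCurve in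
  exact ⟨_, _, _, _, _, addOrderOf_rho hu hu₁, two_nsmul_rho hu hu₁, three_nsmul_rho hu hu₁,
    four_nsmul_rho hu hu₁, five_nsmul_rho hu hu₁⟩
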